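/- Let p ≥ 1 be an integer, let 1 ≤ k ≤ d−1, and let {(V_j, ω_j)}_{j=1}^n be a tight p-fusion frame in ℝ^d in which every subspace V_j has dimension k. Then for every integer p' with 1 ≤ p' ≤ p, the same family {(V_j, ω_j)}_{j=1}^n is a tight p'-fusion frame, i.e. there is a constant A_{p'} > 0 with Σ_{j=1}^n ω_j ‖P_{V_j}(x)‖^{2p'} = A_{p'} ‖x‖^{2p'} for all x ∈ ℝ^d. -/

import Mathlib

/-!
Write `f_j x = ‖P_{V_j} x‖ ^ 2`. Along every line `x + t v` the tightness identity
`∑ ω_j f_j ^ (m + 2) = B ‖x‖ ^ (2 (m + 2))` is a polynomial identity in `t`, so the coefficients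
of `t ^ 2` agree. Summing these over an orthonormal basis `(e_i)` (that is, taking the Laplacian)
and using `∑ ⟪P x, e_i⟫ ^ 2 = ‖P x‖ ^ 2` and `∑ ‖P e_i‖ ^ 2 = tr P = k` gives
`(2 (m + 1) + k) ∑ ω_j f_j ^ (m + 1) = (2 (m + 1) + d) B ‖x‖ ^ (2 (m + 1))`,
so tightness descends from each exponent to the one below it.
-/

open scoped BigOperators

noncomputable def proj {d : ℕ} (V : Submodule ℝ (EuclideanSpace ℝ (Fin d))) :
    EuclideanSpace ℝ (Fin d) →ₗ[ℝ] EuclideanSpace ℝ (Fin d) :=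
  V.subtype ∘ₗ V.orthogonalProjection.toLinearMap

open Polynomial RealInnerProductSpace

def coeffTwoQuadraticPow {R : Type*} [CommSemiring R] (n : ℕ) (a b c : R) : R :=
  (n + 2).choose 2 * a ^ n * b ^ 2 + (n + 2) * a ^ (n + 1) * c

namespace Polynomial

variable {R : Type*} [CommSemiring R] (a b c : R) (P : R[X])

theorem coeff_one_mul_quadratic :
    (P * (C a + C b * X + C c * X ^ 2)).coeff 1 = P.coeff 1 * a + P.coeff 0 * b := by
  simp [mul_add, ← mul_assoc, coeff_mul_X_pow', coeff_mul_X]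

theorem coeff_two_mul_quadratic :
    (P * (C a + C b * X + C c * X ^ 2)).coeff 2 =
      P.coeff 2 * a + P.coeff 1 * b + P.coeff 0 * c := by
  simp [mul_add, ← mul_assoc, coeff_mul_X_pow', coeff_mul_X]

theorem coeff_zero_quadratic_pow (n : ℕ) :
    ((C a + C b * X + C c * X ^ 2) ^ n).coeff 0 = a ^ n := by
  simp [coeff_zero_eq_eval_zero]

theorem coeff_one_quadratic_pow (n : ℕ) :
    ((C a + C b * X + C c * X ^ 2) ^ (n + 1)).coeff 1 = (n + 1) * a ^ n * b := by
  induction n with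
  | zero => simp
  | succ n ih =>
    rw [pow_succ, coeff_one_mul_quadratic, ih, coeff_zero_quadratic_pow]
    push_cast
    ring

theorem coeff_two_quadratic_pow (n : ℕ) :
    ((C a + C b * X + C c * X ^ 2) ^ (n + 2)).coeff 2 = coeffTwoQuadraticPow n a b c := by
  induction n with
  | zero =>
    rw [pow_succ, pow_one, coeff_two_mul_quadratic, coeffTwoQuadraticPow]
    simp only [coeff_add, coeff_C_mul, coeff_C, coeff_X, coeff_X_pow]
    norm_num
    ring
  | succ n ih =>
    rw [pow_succ, coeff_two_mul_quadratic, ih, coeff_one_quadratic_pow, coeff_zero_quadratic_pow,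
      coeffTwoQuadraticPow, coeffTwoQuadraticPow, Nat.choose_succ_succ' (n + 2),
      Nat.choose_one_right]
    push_cast
    ring

end Polynomial

theorem sum_mul_coeffTwoQuadraticPow_eq {ι : Type*} [Fintype ι] (n : ℕ) (ω a b c : ι → ℝ)
    (B a₀ b₀ c₀ : ℝ)
    (h : ∀ t, ∑ j, ω j * (a j + b j * t + c j * t ^ 2) ^ (n + 2) =
      B * (a₀ + b₀ * t + c₀ * t ^ 2) ^ (n + 2)) :
    ∑ j, ω j * coeffTwoQuadraticPow n (a j) (b j) (c j) =
      B * coeffTwoQuadraticPow n a₀ b₀ c₀ := by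
  have hpoly : ∑ j, C (ω j) * (C (a j) + C (b j) * X + C (c j) * X ^ 2) ^ (n + 2) =
      C B * (C a₀ + C b₀ * X + C c₀ * X ^ 2) ^ (n + 2) :=
    Polynomial.funext fun t ↦ by simpa [eval_finsetSum] using h t
  simpa only [finsetSum_coeff, coeff_C_mul, coeff_two_quadratic_pow] using
    congrArg (coeff · 2) hpoly

variable {E : Type*} [NormedAddCommGroup E] [InnerProductSpace ℝ E]

theorem norm_add_smul_sq (x y : E) (t : ℝ) :
    ‖x + t • y‖ ^ 2 = ‖x‖ ^ 2 + 2 * ⟪x, y⟫ * t + ‖y‖ ^ 2 * t ^ 2 := by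
  rw [norm_add_sq_real, inner_smul_right, norm_smul, Real.norm_eq_abs, mul_pow, sq_abs]
  ring

namespace Submodule

variable (K : Submodule ℝ E) [K.HasOrthogonalProjection]

theorem inner_starProjection_starProjection (x y : E) :
    ⟪K.starProjection x, K.starProjection y⟫ = ⟪K.starProjection x, y⟫ := by
  rw [inner_starProjection_left_eq_right,
    K.starProjection_eq_self_iff.mpr (K.starProjection_apply_mem y),
    inner_starProjection_left_eq_right]

theorem norm_starProjection_add_smul_sq (x y : E) (t : ℝ) :
    ‖K.starProjection (x + t • y)‖ ^ 2 =
      ‖K.starProjection x‖ ^ 2 + 2 * ⟪K.starProjection x, y⟫ * t +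
        ‖K.starProjection y‖ ^ 2 * t ^ 2 := by
  rw [map_add, map_smul, norm_add_smul_sq, inner_starProjection_starProjection]

theorem isProj_starProjection : LinearMap.IsProj K (K.starProjection : E →ₗ[ℝ] E) :=
  ⟨K.starProjection_apply_mem, fun _ ↦ starProjection_eq_self_iff.mpr⟩

variable [FiniteDimensional ℝ E] {ι : Type*} [Fintype ι] (b : OrthonormalBasis ι ℝ E)

theorem sum_norm_starProjection_sq :
    ∑ i, ‖K.starProjection (b i)‖ ^ 2 = Module.finrank ℝ K := by
  rw [← K.isProj_starProjection.trace, LinearMap.trace_eq_sum_inner _ b]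
  refine Finset.sum_congr rfl fun i _ ↦ ?_
  rw [ContinuousLinearMap.coe_coe, ← inner_starProjection_left_eq_right,
    ← inner_starProjection_starProjection, real_inner_self_eq_norm_sq]

theorem sum_coeffTwoQuadraticPow_starProjection (m : ℕ) (x : E) :
    ∑ i, coeffTwoQuadraticPow m (‖K.starProjection x‖ ^ 2)
        (2 * ⟪K.starProjection x, b i⟫) (‖K.starProjection (b i)‖ ^ 2) =
      (m + 2) * (2 * (m + 1) + Module.finrank ℝ K) * (‖K.starProjection x‖ ^ 2) ^ (m + 1) := by
  simp only [coeffTwoQuadraticPow, Finset.sum_add_distrib, ← Finset.mul_sum, mul_pow,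
    b.sum_sq_inner_left, sum_norm_starProjection_sq, Nat.cast_choose_two]
  push_cast
  ring

end Submodule

variable {ι : Type*} [Fintype ι]

def IsTightFusionFrame (K : ι → Submodule ℝ E) [∀ j, (K j).HasOrthogonalProjection]
    (ω : ι → ℝ) (p : ℕ) (A : ℝ) : Prop :=
  ∀ x, ∑ j, ω j * ‖(K j).starProjection x‖ ^ (2 * p) = A * ‖x‖ ^ (2 * p)

namespace IsTightFusionFrame

variable {K : ι → Submodule ℝ E} [∀ j, (K j).HasOrthogonalProjection] {ω : ι → ℝ} {B : ℝ}
  {m : ℕ}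

theorem sum_coeffTwoQuadraticPow_eq (h : IsTightFusionFrame K ω (m + 2) B) (x v : E) :
    ∑ j, ω j * coeffTwoQuadraticPow m (‖(K j).starProjection x‖ ^ 2)
        (2 * ⟪(K j).starProjection x, v⟫) (‖(K j).starProjection v‖ ^ 2) =
      B * coeffTwoQuadraticPow m (‖x‖ ^ 2) (2 * ⟪x, v⟫) (‖v‖ ^ 2) := by
  refine sum_mul_coeffTwoQuadraticPow_eq m ω _ _ _ B _ _ _ fun t ↦ ?_
  simpa only [pow_mul, Submodule.norm_starProjection_add_smul_sq, norm_add_smul_sq] using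
    h (x + t • v)

theorem mul_sum_eq [FiniteDimensional ℝ E] {k : ℕ} (hK : ∀ j, Module.finrank ℝ (K j) = k)
    (h : IsTightFusionFrame K ω (m + 2) B) (x : E) :
    (2 * (m + 1) + k) * ∑ j, ω j * (‖(K j).starProjection x‖ ^ 2) ^ (m + 1) =
      (2 * (m + 1) + Module.finrank ℝ E) * B * (‖x‖ ^ 2) ^ (m + 1) := by
  let b := stdOrthonormalBasis ℝ E
  have hspace := (⊤ : Submodule ℝ E).sum_coeffTwoQuadraticPow_starProjection b m x
  simp only [Submodule.starProjection_top, ContinuousLinearMap.id_apply, finrank_top] at hspace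
  have hsum := Finset.sum_congr rfl fun i (_ : i ∈ Finset.univ) ↦
    h.sum_coeffTwoQuadraticPow_eq x (b i)
  rw [Finset.sum_comm, ← Finset.mul_sum, hspace] at hsum
  simp only [← Finset.mul_sum, Submodule.sum_coeffTwoQuadraticPow_starProjection, hK,
    mul_left_comm (ω _)] at hsum
  refine mul_left_cancel₀ (by positivity : (m + 2 : ℝ) ≠ 0) ?_
  linear_combination hsum

theorem of_succ_succ [FiniteDimensional ℝ E] {k : ℕ} (hK : ∀ j, Module.finrank ℝ (K j) = k)
    (h : IsTightFusionFrame K ω (m + 2) B) :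
    IsTightFusionFrame K ω (m + 1)
      ((2 * (m + 1) + Module.finrank ℝ E) / (2 * (m + 1) + k) * B) := by
  intro x
  have hk : (2 * (m + 1) + k : ℝ) ≠ 0 := by positivity
  simp only [pow_mul]
  rw [div_mul_eq_mul_div, div_mul_eq_mul_div, eq_div_iff hk, mul_comm,
    h.mul_sum_eq hK x]

theorem exists_pos_of_le [FiniteDimensional ℝ E] {k : ℕ}
    (hK : ∀ j, Module.finrank ℝ (K j) = k) {p : ℕ} {A : ℝ} (h : IsTightFusionFrame K ω p A)
    (hA : 0 < A) {p' : ℕ} (hp' : 1 ≤ p') (hp'p : p' ≤ p) :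
    ∃ A' > 0, IsTightFusionFrame K ω p' A' := by
  induction p, hp'p using Nat.le_induction generalizing A with
  | base => exact ⟨A, hA, h⟩
  | succ p hp ih =>
    obtain ⟨m, rfl⟩ := Nat.exists_eq_add_of_le' (hp'.trans hp)
    exact ih (h.of_succ_succ hK) (by positivity)

end IsTightFusionFrame

theorem stmt11_general {d n k : ℕ} (p : ℕ)
    (V : Fin n → Submodule ℝ (EuclideanSpace ℝ (Fin d)))
    (hVdim : ∀ j, Module.finrank ℝ (V j) = k)
    (ω : Fin n → ℝ)
    (A : ℝ) (hA : 0 < A)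
    (h : ∀ x : EuclideanSpace ℝ (Fin d),
      ∑ j, ω j * ‖proj (V j) x‖ ^ (2 * p) = A * ‖x‖ ^ (2 * p)) :
    ∀ p' : ℕ, 1 ≤ p' → p' ≤ p →
      ∃ A' : ℝ, 0 < A' ∧ ∀ x : EuclideanSpace ℝ (Fin d),
        ∑ j, ω j * ‖proj (V j) x‖ ^ (2 * p') = A' * ‖x‖ ^ (2 * p') := fun _ hp' hp'p ↦
  IsTightFusionFrame.exists_pos_of_le (K := V) hVdim h hA hp' hp'p

theorem stmt11 {d n k : ℕ} (p : ℕ) (hp : 1 ≤ p) (hk1 : 1 ≤ k) (hk2 : k ≤ d - 1)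
    (V : Fin n → Submodule ℝ (EuclideanSpace ℝ (Fin d)))
    (hVdim : ∀ j, Module.finrank ℝ (V j) = k)
    (ω : Fin n → ℝ) (hω : ∀ j, 0 < ω j)
    (A : ℝ) (hA : 0 < A)
    (h : ∀ x : EuclideanSpace ℝ (Fin d),
      ∑ j, ω j * ‖proj (V j) x‖ ^ (2 * p) = A * ‖x‖ ^ (2 * p)) :
    ∀ p' : ℕ, 1 ≤ p' → p' ≤ p →
      ∃ A' : ℝ, 0 < A' ∧ ∀ x : EuclideanSpace ℝ (Fin d),
        ∑ j, ω j * ‖proj (V j) x‖ ^ (2 * p') = A' * ‖x‖ ^ (2 * p') :=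
  stmt11_general p V hVdim ω A hA h
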